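/- For every real z ≥ 1 and every positive integer a, one has ∑_{n ≤ z} μ(n)²/φ(n) ≤ (a/φ(a)) · ∑_{m ≤ z, gcd(m,a)=1} μ(m)²/φ(m). -/

import Mathlib

/-!
Every squarefree `n` splits as `n = gcd(n, a) · m` with `m = n / gcd(n, a)` coprime to `a`
(and hence to `gcd(n, a)`), and `n ↦ (gcd(n, a), m)` is injective. As `f = μ² / φ` is
multiplicative, nonnegative and supported on squarefree numbers, the left-hand sum is therefore
at most `(∑_{d ∣ a} f d) · ∑_{m ≤ z, (m, a) = 1} f m`, and `∑_{d ∣ a} f d = a / φ(a)`: both sides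
are multiplicative and at a prime power `p^k` (`k ≥ 1`) both equal `1 + 1 / (p - 1)`.
-/

open ArithmeticFunction Finset
open scoped ArithmeticFunction.Moebius ArithmeticFunction.zeta

namespace ArithmeticFunction

theorem IsMultiplicative.sum_Icc_le_sum_divisors_mul_sum_Icc_coprime {R : Type*} [CommSemiring R]
    [PartialOrder R] [IsOrderedRing R] {f : ArithmeticFunction R} (hf : f.IsMultiplicative)
    (hf_nonneg : ∀ n, 0 ≤ f n) (hf_squarefree : ∀ n, ¬Squarefree n → f n = 0) {a : ℕ}
    (ha : a ≠ 0) (N : ℕ) :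
    ∑ n ∈ Icc 1 N, f n ≤ (∑ d ∈ a.divisors, f d) * ∑ m ∈ Icc 1 N with m.Coprime a, f m := by
  set split : ℕ → ℕ × ℕ := fun n => (n.gcd a, n / n.gcd a)
  have split_injective : split.Injective :=
    Function.LeftInverse.injective (g := fun q => q.1 * q.2) fun n =>
      Nat.mul_div_cancel' (n.gcd_dvd_left a)
  have split_mem {n : ℕ} (hn : n ∈ {n ∈ Icc 1 N | Squarefree n}) :
      split n ∈ a.divisors ×ˢ {m ∈ Icc 1 N | m.Coprime a} := by
    simp only [mem_filter, mem_Icc] at hn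
    obtain ⟨⟨hn1, hnN⟩, hsq⟩ := hn
    simp only [split, mem_product, Nat.mem_divisors, mem_filter, mem_Icc]
    exact ⟨⟨n.gcd_dvd_right a, ha⟩,
      ⟨Nat.div_pos (Nat.gcd_le_left a hn1) (Nat.gcd_pos_of_pos_left a hn1),
        (Nat.div_le_self _ _).trans hnN⟩, Nat.coprime_div_gcd_of_squarefree hsq ha⟩
  have f_split {n : ℕ} (hsq : Squarefree n) : f n = f (split n).1 * f (split n).2 := by
    have hcop : (n.gcd a).Coprime (n / n.gcd a) :=
      ((Nat.coprime_div_gcd_of_squarefree hsq ha).coprime_dvd_right (n.gcd_dvd_right a)).symm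
    rw [← hf.map_mul_of_coprime hcop, Nat.mul_div_cancel' (n.gcd_dvd_left a)]
  calc ∑ n ∈ Icc 1 N, f n
      = ∑ n ∈ Icc 1 N with Squarefree n, f n :=
        (sum_filter_of_ne fun n _ h => not_imp_comm.1 (hf_squarefree n) h).symm
    _ = ∑ n ∈ Icc 1 N with Squarefree n, f (split n).1 * f (split n).2 :=
        sum_congr rfl fun n hn => f_split (mem_filter.1 hn).2
    _ = ∑ q ∈ {n ∈ Icc 1 N | Squarefree n}.image split, f q.1 * f q.2 := by
        rw [sum_image fun x _ y _ h => split_injective h]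
    _ ≤ ∑ q ∈ a.divisors ×ˢ {m ∈ Icc 1 N | m.Coprime a}, f q.1 * f q.2 :=
        sum_le_sum_of_subset_of_nonneg (image_subset_iff.2 fun n hn => split_mem hn)
          fun q _ _ => mul_nonneg (hf_nonneg _) (hf_nonneg _)
    _ = _ := by rw [sum_mul_sum, sum_product]

def totient : ArithmeticFunction ℕ := ⟨Nat.totient, Nat.totient_zero⟩

@[simp]
theorem totient_apply (n : ℕ) : totient n = n.totient := rfl

theorem isMultiplicative_totient : totient.IsMultiplicative :=
  ⟨Nat.totient_one, Nat.totient_mul⟩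

noncomputable def moebiusSqDivTotient : ArithmeticFunction ℝ :=
  ((μ : ArithmeticFunction ℝ).ppow 2).pdiv totient

theorem moebiusSqDivTotient_apply (n : ℕ) :
    moebiusSqDivTotient n = (μ n : ℝ) ^ 2 / n.totient := by
  simp [moebiusSqDivTotient, pdiv_apply, ppow_apply two_pos]

theorem isMultiplicative_moebiusSqDivTotient : moebiusSqDivTotient.IsMultiplicative :=
  (isMultiplicative_moebius.intCast.ppow).pdiv isMultiplicative_totient.natCast

theorem moebiusSqDivTotient_nonneg (n : ℕ) : 0 ≤ moebiusSqDivTotient n := by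
  rw [moebiusSqDivTotient_apply]
  positivity

theorem moebiusSqDivTotient_eq_zero_of_not_squarefree {n : ℕ} (hn : ¬Squarefree n) :
    moebiusSqDivTotient n = 0 := by
  simp [moebiusSqDivTotient_apply, moebius_eq_zero_of_not_squarefree hn]

theorem sum_divisors_prime_pow_moebiusSqDivTotient {p : ℕ} (hp : p.Prime) (k : ℕ) :
    ∑ d ∈ (p ^ k).divisors, moebiusSqDivTotient d = (p ^ k : ℕ) / (p ^ k).totient := by
  rw [Nat.sum_divisors_prime_pow hp]
  rcases k with _ | k
  · simp [moebiusSqDivTotient_apply]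
  rw [sum_range_succ', sum_range_succ', sum_eq_zero fun i _ => ?_]
  · have hp0 : (p : ℝ) ≠ 0 := by exact_mod_cast hp.ne_zero
    have hp1 : (p : ℝ) - 1 ≠ 0 := sub_ne_zero.2 (by exact_mod_cast hp.one_lt.ne')
    rw [zero_add, pow_one, pow_zero, isMultiplicative_moebiusSqDivTotient.map_one,
      moebiusSqDivTotient_apply, moebius_apply_prime hp, Nat.totient_prime hp,
      Nat.totient_prime_pow_succ hp]
    push_cast [hp.one_le]
    field_simp
    ring
  · simp [moebiusSqDivTotient_apply, moebius_apply_prime_pow hp]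

theorem sum_divisors_moebiusSqDivTotient (n : ℕ) :
    ∑ d ∈ n.divisors, moebiusSqDivTotient d = n / n.totient := by
  have h : (ζ : ArithmeticFunction ℝ) * moebiusSqDivTotient =
      (ArithmeticFunction.id : ArithmeticFunction ℝ).pdiv totient := by
    refine (isMultiplicative_zeta.natCast.mul isMultiplicative_moebiusSqDivTotient
      |>.eq_iff_eq_on_prime_powers _ _ <| isMultiplicative_id.natCast.pdiv
        isMultiplicative_totient.natCast).2 fun p k hp => ?_
    rw [coe_zeta_mul_apply, sum_divisors_prime_pow_moebiusSqDivTotient hp k, pdiv_apply]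
    simp
  rw [← coe_zeta_mul_apply, h, pdiv_apply]
  simp

end ArithmeticFunction

open ArithmeticFunction ArithmeticFunction.Moebius in
theorem sum_le_coprime_sum_general (z : ℝ) (a : ℕ) (ha : 0 < a) :
    ∑ n ∈ Finset.Icc 1 ⌊z⌋₊, ((μ n : ℝ)) ^ 2 / (Nat.totient n) ≤
      ((a : ℝ) / Nat.totient a) *
        ∑ m ∈ (Finset.Icc 1 ⌊z⌋₊).filter (fun m => Nat.Coprime m a),
          ((μ m : ℝ)) ^ 2 / (Nat.totient m) := by
  have h := isMultiplicative_moebiusSqDivTotient.sum_Icc_le_sum_divisors_mul_sum_Icc_coprime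
    moebiusSqDivTotient_nonneg (fun _ => moebiusSqDivTotient_eq_zero_of_not_squarefree) ha.ne' ⌊z⌋₊
  rw [sum_divisors_moebiusSqDivTotient] at h
  simpa only [moebiusSqDivTotient_apply] using h

open ArithmeticFunction ArithmeticFunction.Moebius in
theorem sum_le_coprime_sum (z : ℝ) (hz : 1 ≤ z) (a : ℕ) (ha : 0 < a) :
    ∑ n ∈ Finset.Icc 1 ⌊z⌋₊, ((μ n : ℝ)) ^ 2 / (Nat.totient n) ≤
      ((a : ℝ) / Nat.totient a) *
        ∑ m ∈ (Finset.Icc 1 ⌊z⌋₊).filter (fun m => Nat.Coprime m a),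
          ((μ m : ℝ)) ^ 2 / (Nat.totient m) :=
  sum_le_coprime_sum_general z a ha
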